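/- For every integer n ≥ 1 there exists a unique monic polynomial P of degree n with complex coefficients such that the formal Laurent series q^{-n} − P(f(q)) lies in q·ℂ[[q]], i.e. all of its coefficients in degrees ≤ 0 vanish. (This polynomial is the n-th Faber polynomial P_{n,f} of f.) -/

import Mathlib

/-!
Since `f = q⁻¹ + O(q)`, every power `f ^ k` is `q⁻ᵏ` plus terms of higher order. Hence the map
sending `P` to the coefficients of `P(f)` in degrees `≤ 0` is unitriangular with respect to the
bases `Xᵏ` and `q⁻ᵏ`: the lowest term of degree `≤ 0` of any Laurent series can be cancelled by a
multiple of a power of `f` (existence), and for a nonzero polynomial `D` the series `D(f)` has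
the term `D.leadingCoeff • q^(-D.natDegree)` (uniqueness).
-/

open Polynomial

namespace LaurentSeries

variable {R : Type*} [CommRing R]

theorem algebraMap_eq_C (c : R) : algebraMap R (LaurentSeries R) c = HahnSeries.C c := by
  rw [HahnSeries.algebraMap_apply', PowerSeries.algebraMap_apply, Algebra.algebraMap_self_apply,
    HahnSeries.ofPowerSeries_C]

theorem coeff_algebraMap_mul (c : R) (x : LaurentSeries R) (m : ℤ) :
    (algebraMap R (LaurentSeries R) c * x).coeff m = c * x.coeff m := by
  rw [algebraMap_eq_C, HahnSeries.C_apply, HahnSeries.coeff_single_zero_mul]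

theorem coeff_aeval (f : LaurentSeries R) (P : R[X]) (m : ℤ) :
    (aeval f P).coeff m = ∑ i ∈ Finset.range (P.natDegree + 1), P.coeff i * (f ^ i).coeff m := by
  simp only [aeval_eq_sum_range, HahnSeries.coeff_sum, Algebra.smul_def, coeff_algebraMap_mul]

variable [IsDomain R] {f : LaurentSeries R}

theorem order_eq_neg_one (hf_lead : f.coeff (-1) = 1) (hf_neg : ∀ m < -1, f.coeff m = 0) :
    f.order = -1 := by
  have hf : f ≠ 0 := HahnSeries.ne_zero_of_coeff_ne_zero (hf_lead ▸ one_ne_zero)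
  refine (HahnSeries.order_le_of_coeff_ne_zero (hf_lead ▸ one_ne_zero)).antisymm
    (not_lt.mp fun h => ?_)
  exact hf (HahnSeries.coeff_order_eq_zero.mp (hf_neg _ h))

theorem coeff_pow_neg (hf_lead : f.coeff (-1) = 1) (hf_neg : ∀ m < -1, f.coeff m = 0) (k : ℕ) :
    (f ^ k).coeff (-k) = 1 := by
  have hord := order_eq_neg_one hf_lead hf_neg
  have hlead : (f ^ k).leadingCoeff = 1 := by
    induction k with
    | zero => exact HahnSeries.leadingCoeff_one
    | succ k ih =>
      rw [pow_succ, HahnSeries.leadingCoeff_mul, ih, HahnSeries.leadingCoeff_eq, hord, hf_lead,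
        one_mul]
  rwa [HahnSeries.leadingCoeff_eq, HahnSeries.order_pow, hord, smul_neg, nsmul_one] at hlead

theorem coeff_pow_of_lt (hf_lead : f.coeff (-1) = 1) (hf_neg : ∀ m < -1, f.coeff m = 0) (k : ℕ)
    {m : ℤ} (hm : m < -k) : (f ^ k).coeff m = 0 :=
  HahnSeries.coeff_eq_zero_of_lt_order (by simpa [order_eq_neg_one hf_lead hf_neg] using hm)

theorem coeff_aeval_neg_natDegree (hf_lead : f.coeff (-1) = 1)
    (hf_neg : ∀ m < -1, f.coeff m = 0) (P : R[X]) :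
    (aeval f P).coeff (-P.natDegree) = P.leadingCoeff := by
  rw [coeff_aeval, Finset.sum_range_succ, coeff_pow_neg hf_lead hf_neg, mul_one,
    Finset.sum_eq_zero fun i hi => ?_, zero_add]
  · rfl
  · rw [coeff_pow_of_lt hf_lead hf_neg i (by simpa using hi), mul_zero]

theorem eq_of_coeff_sub_aeval_eq_zero (hf_lead : f.coeff (-1) = 1)
    (hf_neg : ∀ m < -1, f.coeff m = 0) {g : LaurentSeries R} {P Q : R[X]}
    (hP : ∀ m ≤ 0, (g - aeval f P).coeff m = 0) (hQ : ∀ m ≤ 0, (g - aeval f Q).coeff m = 0) :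
    P = Q := by
  rw [← sub_eq_zero, ← Polynomial.leadingCoeff_eq_zero, ← coeff_aeval_neg_natDegree hf_lead hf_neg,
    map_sub, ← sub_sub_sub_cancel_left _ _ g, HahnSeries.coeff_sub, hP _ (by omega),
    hQ _ (by omega), sub_zero]

theorem exists_degree_lt_coeff_sub_aeval_eq_zero (hf_lead : f.coeff (-1) = 1)
    (hf_neg : ∀ m < -1, f.coeff m = 0) (k : ℕ) (g : LaurentSeries R)
    (hg : ∀ m ≤ -(k : ℤ), g.coeff m = 0) :
    ∃ Q : R[X], Q.degree < k ∧ ∀ m ≤ 0, (g - aeval f Q).coeff m = 0 := by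
  induction k generalizing g with
  | zero => exact ⟨0, by simp, by simpa using hg⟩
  | succ k ih =>
    set c := g.coeff (-k)
    have hg' : ∀ m ≤ -(k : ℤ), (g - algebraMap R _ c * f ^ k).coeff m = 0 := by
      intro m hm
      rw [HahnSeries.coeff_sub, coeff_algebraMap_mul]
      rcases hm.lt_or_eq with hm | rfl
      · rw [hg m (by omega), coeff_pow_of_lt hf_lead hf_neg k hm, mul_zero, sub_zero]
      · rw [coeff_pow_neg hf_lead hf_neg, mul_one, sub_self]
    obtain ⟨Q, hQdeg, hQ⟩ := ih _ hg'
    refine ⟨C c * X ^ k + Q, ?_, fun m hm => ?_⟩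
    · refine (degree_add_le _ _).trans_lt (max_lt ?_ (hQdeg.trans ?_))
      · exact (degree_C_mul_X_pow_le k c).trans_lt (WithBot.coe_lt_coe.mpr k.lt_succ_self)
      · exact WithBot.coe_lt_coe.mpr k.lt_succ_self
    · rw [map_add, map_mul, aeval_C, map_pow, aeval_X, ← sub_sub]
      exact hQ m hm

end LaurentSeries

open LaurentSeries in
theorem faber_polynomial_exists_unique_general
    (f : LaurentSeries ℂ)
    (hf_lead : f.coeff (-1) = 1)
    (hf_neg : ∀ m : ℤ, m < -1 → f.coeff m = 0)
    (n : ℕ) :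
    ∃! P : Polynomial ℂ, P.Monic ∧ P.natDegree = n ∧
      ∀ m : ℤ, m ≤ 0 →
        ((HahnSeries.single (-(n : ℤ)) (1 : ℂ) : LaurentSeries ℂ)
          - Polynomial.aeval f P).coeff m = 0 := by
  have hg : ∀ m ≤ -(n : ℤ), (HahnSeries.single (-(n : ℤ)) (1 : ℂ) - f ^ n).coeff m = 0 := by
    intro m hm
    rw [HahnSeries.coeff_sub]
    rcases hm.lt_or_eq with hm | rfl
    · rw [HahnSeries.coeff_single_of_ne hm.ne, coeff_pow_of_lt hf_lead hf_neg n hm, sub_zero]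
    · rw [HahnSeries.coeff_single_same, coeff_pow_neg hf_lead hf_neg, sub_self]
  obtain ⟨Q, hQdeg, hQ⟩ := exists_degree_lt_coeff_sub_aeval_eq_zero hf_lead hf_neg n _ hg
  have hP : ∀ m ≤ 0, (HahnSeries.single (-(n : ℤ)) (1 : ℂ) - aeval f (X ^ n + Q)).coeff m = 0 := by
    intro m hm
    rw [map_add, map_pow, aeval_X, ← sub_sub]
    exact hQ m hm
  refine ⟨X ^ n + Q, ⟨monic_X_pow_add hQdeg, ?_, hP⟩, fun P' ⟨_, _, hP'⟩ => ?_⟩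
  · rw [natDegree_add_eq_left_of_degree_lt (by rwa [degree_X_pow]), natDegree_X_pow]
  · exact eq_of_coeff_sub_aeval_eq_zero hf_lead hf_neg hP' hP

/-- **Existence and uniqueness of Faber polynomials.**
Let `f = q⁻¹ + ∑_{k ≥ 1} a_k q^k ∈ ℂ((q))` be a formal Laurent series with leading term `q⁻¹`
and no constant term.  For every `n ≥ 1` there is a unique monic polynomial `P` of degree `n`
with complex coefficients such that `q⁻ⁿ - P(f(q))` lies in `q·ℂ[[q]]`, i.e. all of its
coefficients in degrees `≤ 0` vanish. -/
theorem faber_polynomial_exists_unique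
    (f : LaurentSeries ℂ)
    (hf_lead : f.coeff (-1) = 1)
    (hf_const : f.coeff 0 = 0)
    (hf_neg : ∀ m : ℤ, m < -1 → f.coeff m = 0)
    (n : ℕ) (hn : 1 ≤ n) :
    ∃! P : Polynomial ℂ, P.Monic ∧ P.natDegree = n ∧
      ∀ m : ℤ, m ≤ 0 →
        ((HahnSeries.single (-(n : ℤ)) (1 : ℂ) : LaurentSeries ℂ)
          - Polynomial.aeval f P).coeff m = 0 :=
  faber_polynomial_exists_unique_general f hf_lead hf_neg n
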